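/- Let η, R_rad, λ, r, Ψ > 0 and Φ, Θ ∈ ℝ, set k₀ = 2π/λ and f_n(x, z) = ((x − Φ)² + Ψ² + (z − Θ)²)^{−n/2}, and for L_x, L_z > 0 define G̃(L_x, L_z) = (η/(8 R_rad)) · (Ψ/(4π)) · ∬_{[−L_x/(2r), L_x/(2r)] × [−L_z/(2r), L_z/(2r)]} ( f₃ − (1/(k₀² r²)) f₅ + (1/(k₀⁴ r⁴)) f₇ ) dx dz. Then as L_x and L_z both tend to infinity, G̃(L_x, L_z) converges to (η/(8 R_rad)) · (1/2 − λ²/(24 π² r² Ψ²) + λ⁴/(160 π⁴ r⁴ Ψ⁴)). -/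

import Mathlib

/-!
The integrand is integrable over the whole plane, so the rectangle integrals converge to the
integral over `ℝ²`. After translating the foot point `(Φ, Θ)` to the origin, polar coordinates
give `∬ (Ψ² + x² + z²)^(-s) dx dz = 2π ∫₀^∞ ρ (Ψ² + ρ²)^(-s) dρ = π / ((s - 1) Ψ^(2s-2))`,
which for `s = 3/2, 5/2, 7/2` yields the three terms of the limit once `k₀ = 2π/λ` is inserted.
-/

open Real MeasureTheory Filter Topology Set

theorem aecover_Ioc_prod_Ioc :
    AECover (volume : Measure (ℝ × ℝ)) (atTop ×ˢ atTop)
      fun L : ℝ × ℝ => Ioc (-L.1) L.1 ×ˢ Ioc (-L.2) L.2 where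
  ae_eventually_mem := ae_of_all _ fun q => by
    have h1 : ∀ᶠ a : ℝ in atTop, q.1 ∈ Ioc (-a) a :=
      (eventually_gt_atTop (-q.1)).and (eventually_ge_atTop q.1) |>.mono
        fun a ha => ⟨neg_lt.1 ha.1, ha.2⟩
    have h2 : ∀ᶠ b : ℝ in atTop, q.2 ∈ Ioc (-b) b :=
      (eventually_gt_atTop (-q.2)).and (eventually_ge_atTop q.2) |>.mono
        fun b hb => ⟨neg_lt.1 hb.1, hb.2⟩
    exact (h1.prod_mk h2).mono fun L hL => ⟨hL.1, hL.2⟩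
  measurableSet _ := measurableSet_Ioc.prod measurableSet_Ioc

theorem tendsto_intervalIntegral_intervalIntegral_atTop {E : Type*} [NormedAddCommGroup E]
    [NormedSpace ℝ E] {G : ℝ × ℝ → E} (hG : Integrable G) :
    Tendsto (fun L : ℝ × ℝ => ∫ x in -L.1..L.1, ∫ z in -L.2..L.2, G (x, z))
      (atTop ×ˢ atTop) (𝓝 (∫ q, G q)) := by
  refine (aecover_Ioc_prod_Ioc.integral_tendsto_of_countably_generated hG).congr' ?_
  filter_upwards [prod_mem_prod (eventually_ge_atTop 0) (eventually_ge_atTop 0)]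
    with L ⟨h1, h2⟩
  simp only [intervalIntegral.integral_of_le (neg_le_self h1),
    intervalIntegral.integral_of_le (neg_le_self h2)]
  exact setIntegral_prod G hG.integrableOn

section

variable {a s : ℝ}

theorem integral_Ioi_mul_rpow_add_sq (ha : 0 < a) (hs : 1 < s) :
    ∫ ρ in Ioi (0 : ℝ), ρ * (a + ρ ^ 2) ^ (-s) = a ^ (1 - s) / (2 * (s - 1)) := by
  set F : ℝ → ℝ := fun ρ => -(a + ρ ^ 2) ^ (1 - s) / (2 * (s - 1))
  have hderiv : ∀ ρ ∈ Ici (0 : ℝ), HasDerivAt F (ρ * (a + ρ ^ 2) ^ (-s)) ρ := by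
    intro ρ _
    have hpos : 0 < a + ρ ^ 2 := by positivity
    have h := (((hasDerivAt_pow 2 ρ).const_add a).rpow_const (p := 1 - s)
      (Or.inl hpos.ne')).neg.div_const (2 * (s - 1))
    refine h.congr_deriv ?_
    rw [show 1 - s - 1 = -s by ring]
    field_simp [show s - 1 ≠ 0 by linarith]
    ring
  have hlim : Tendsto F atTop (𝓝 0) := by
    have : Tendsto (fun ρ : ℝ => a + ρ ^ 2) atTop atTop :=
      tendsto_atTop_add_const_left _ a (tendsto_pow_atTop two_ne_zero)
    simpa [F, neg_div] using
      (((tendsto_rpow_neg_atTop (by linarith : 0 < s - 1)).comp this).neg.div_const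
        (2 * (s - 1)))
  rw [integral_Ioi_of_hasDerivAt_of_nonneg' hderiv
    (fun ρ hρ => by have : (0:ℝ) < ρ := hρ; positivity) hlim]
  simp [F, neg_div]

theorem integrable_rpow_neg_add_sq_add_sq (ha : 0 < a) (hs : 1 < s) :
    Integrable fun q : ℝ × ℝ => (a + q.1 ^ 2 + q.2 ^ 2) ^ (-s) := by
  have hm : 0 < min a 1 := lt_min ha one_pos
  have hbracket : Integrable fun q : ℝ × ℝ => (1 + ‖q‖ ^ 2) ^ (-(2 * s) / 2) :=
    integrable_rpow_neg_one_add_norm_sq (by simpa using hs)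
  refine (hbracket.const_mul ((min a 1) ^ (-s))).mono'
    ((by fun_prop : Continuous fun q : ℝ × ℝ => a + q.1 ^ 2 + q.2 ^ 2).rpow_const
      fun q => Or.inl (by positivity)).aestronglyMeasurable (ae_of_all _ fun q => ?_)
  have hnorm : ‖q‖ ^ 2 ≤ q.1 ^ 2 + q.2 ^ 2 := by
    rw [Prod.norm_def, Real.norm_eq_abs, Real.norm_eq_abs]
    rcases le_total |q.1| |q.2| with h | h
    · rw [max_eq_right h, sq_abs]; nlinarith
    · rw [max_eq_left h, sq_abs]; nlinarith
  have hle : min a 1 * (1 + ‖q‖ ^ 2) ≤ a + q.1 ^ 2 + q.2 ^ 2 := by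
    nlinarith [min_le_left a 1, min_le_right a 1, sq_nonneg ‖q‖]
  rw [Real.norm_of_nonneg (by positivity), show -(2 * s) / 2 = -s by ring,
    ← Real.mul_rpow hm.le (by positivity)]
  exact Real.rpow_le_rpow_of_nonpos (by positivity) hle (by linarith)

theorem integral_rpow_neg_add_sq_add_sq (ha : 0 < a) (hs : 1 < s) :
    ∫ q : ℝ × ℝ, (a + q.1 ^ 2 + q.2 ^ 2) ^ (-s) = π / (s - 1) * a ^ (1 - s) := by
  rw [← integral_comp_polarCoord_symm, polarCoord_target, Measure.volume_eq_prod]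
  calc _ = ∫ p in Ioi 0 ×ˢ Ioo (-π) π, p.1 * (a + p.1 ^ 2) ^ (-s) * (fun _ => (1 : ℝ)) p.2
          ∂(volume.prod volume) := by
        refine setIntegral_congr_fun (measurableSet_Ioi.prod measurableSet_Ioo) fun p _ => ?_
        simp only [polarCoord_symm_apply, smul_eq_mul, mul_one, mul_pow, add_assoc, ← mul_add,
          cos_sq_add_sin_sq]
    _ = π / (s - 1) * a ^ (1 - s) := by
        rw [setIntegral_prod_mul (fun ρ => ρ * (a + ρ ^ 2) ^ (-s)) (fun _ => (1 : ℝ)),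
          integral_Ioi_mul_rpow_add_sq ha hs]
        simp only [integral_const, MeasurableSet.univ, measureReal_restrict_apply, univ_inter,
          volume_real_Ioo, sub_neg_eq_add, show (0 : ℝ) ≤ π + π by positivity, sup_of_le_left,
          smul_eq_mul, mul_one]
        field_simp
        ring

end

/-- The squared distance from the transmitter at `(Φ, Ψ, Θ)` to the array point `(x, 0, z)`. -/
def arraySqDist (Φ Ψ Θ : ℝ) (q : ℝ × ℝ) : ℝ := (q.1 - Φ) ^ 2 + Ψ ^ 2 + (q.2 - Θ) ^ 2

theorem arraySqDist_eq (Φ Ψ Θ : ℝ) (q : ℝ × ℝ) :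
    arraySqDist Φ Ψ Θ q = Ψ ^ 2 + (q - (Φ, Θ)).1 ^ 2 + (q - (Φ, Θ)).2 ^ 2 := by
  simp only [arraySqDist, Prod.fst_sub, Prod.snd_sub]
  ring

theorem integrable_arraySqDist_rpow_neg (Φ Θ : ℝ) {Ψ s : ℝ} (hΨ : 0 < Ψ) (hs : 1 < s) :
    Integrable fun q => arraySqDist Φ Ψ Θ q ^ (-s) := by
  simp_rw [arraySqDist_eq]
  exact (integrable_rpow_neg_add_sq_add_sq (by positivity) hs).comp_sub_right _

theorem integral_arraySqDist_rpow_neg (Φ Θ : ℝ) {Ψ s : ℝ} (hΨ : 0 < Ψ) (hs : 1 < s) :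
    ∫ q, arraySqDist Φ Ψ Θ q ^ (-s) = π / ((s - 1) * Ψ ^ (2 * s - 2)) := by
  simp_rw [arraySqDist_eq]
  rw [integral_sub_right_eq_self fun q : ℝ × ℝ => (Ψ ^ 2 + q.1 ^ 2 + q.2 ^ 2) ^ (-s),
    integral_rpow_neg_add_sq_add_sq (by positivity) hs, ← Real.rpow_natCast,
    ← Real.rpow_mul hΨ.le, show ((2 : ℕ) : ℝ) * (1 - s) = -(2 * s - 2) by push_cast; ring,
    Real.rpow_neg hΨ.le, ← div_eq_mul_inv, div_div]

theorem stmt_6_general (eta Rrad lam r Ψ Φ Θ k₀ : ℝ)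
    (hr : 0 < r) (hΨ : 0 < Ψ) (hk : k₀ = 2 * π / lam) :
    Filter.Tendsto
      (fun L : ℝ × ℝ =>
        eta / (8 * Rrad) * (Ψ / (4 * π)) *
          ∫ x in (-(L.1 / (2 * r)))..(L.1 / (2 * r)),
            ∫ z in (-(L.2 / (2 * r)))..(L.2 / (2 * r)),
              (((x - Φ) ^ 2 + Ψ ^ 2 + (z - Θ) ^ 2) ^ (-(3 / 2 : ℝ)) -
                (1 / (k₀ ^ 2 * r ^ 2)) *
                  ((x - Φ) ^ 2 + Ψ ^ 2 + (z - Θ) ^ 2) ^ (-(5 / 2 : ℝ)) +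
                (1 / (k₀ ^ 4 * r ^ 4)) *
                  ((x - Φ) ^ 2 + Ψ ^ 2 + (z - Θ) ^ 2) ^ (-(7 / 2 : ℝ))))
      (Filter.atTop ×ˢ Filter.atTop)
      (𝓝 (eta / (8 * Rrad) *
        (1 / 2 - lam ^ 2 / (24 * π ^ 2 * r ^ 2 * Ψ ^ 2) +
          lam ^ 4 / (160 * π ^ 4 * r ^ 4 * Ψ ^ 4)))) := by
  set d := arraySqDist Φ Ψ Θ
  set c₂ := 1 / (k₀ ^ 2 * r ^ 2)
  set c₄ := 1 / (k₀ ^ 4 * r ^ 4)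
  have hd (s : ℝ) (hs : 1 < s) : Integrable fun q => d q ^ (-s) :=
    integrable_arraySqDist_rpow_neg Φ Θ hΨ hs
  have h3 : Integrable fun q => d q ^ (-(3 / 2 : ℝ)) := hd _ (by norm_num)
  have h5 : Integrable fun q => c₂ * d q ^ (-(5 / 2 : ℝ)) := (hd _ (by norm_num)).const_mul _
  have h7 : Integrable fun q => c₄ * d q ^ (-(7 / 2 : ℝ)) := (hd _ (by norm_num)).const_mul _
  have h35 : Integrable fun q => d q ^ (-(3 / 2 : ℝ)) - c₂ * d q ^ (-(5 / 2 : ℝ)) := h3.sub h5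
  have hG : Integrable fun q =>
      d q ^ (-(3 / 2 : ℝ)) - c₂ * d q ^ (-(5 / 2 : ℝ)) + c₄ * d q ^ (-(7 / 2 : ℝ)) :=
    h35.add h7
  have hL : Tendsto (fun L : ℝ × ℝ => (L.1 / (2 * r), L.2 / (2 * r)))
      (atTop ×ˢ atTop) (atTop ×ˢ atTop) :=
    (tendsto_id.atTop_div_const (by positivity)).prodMap
      (tendsto_id.atTop_div_const (by positivity))
  have hlim := ((tendsto_intervalIntegral_intervalIntegral_atTop hG).comp hL).const_mul
    (eta / (8 * Rrad) * (Ψ / (4 * π)))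
  rw [integral_add h35 h7, integral_sub h3 h5, integral_const_mul, integral_const_mul,
    integral_arraySqDist_rpow_neg Φ Θ hΨ (by norm_num),
    integral_arraySqDist_rpow_neg Φ Θ hΨ (by norm_num),
    integral_arraySqDist_rpow_neg Φ Θ hΨ (by norm_num)] at hlim
  convert hlim using 1
  · rfl
  congr 1
  norm_num [c₂, c₄, Real.rpow_ofNat, hk]
  field_simp
  ring

/-- Corollary 3 of the paper: with `k₀ = 2π/λ` and
`fₙ(x,z) = ((x - Φ)² + Ψ² + (z - Θ)²)^{-n/2}`, the CAP-array channel gain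
`G̃(Lx, Lz) = (η/(8 R_rad)) (Ψ/(4π)) ∬_{[-Lx/(2r),Lx/(2r)]×[-Lz/(2r),Lz/(2r)]}
(f₃ - f₅/(k₀²r²) + f₇/(k₀⁴r⁴)) dx dz` converges, as `Lx, Lz → ∞`, to
`(η/(8 R_rad)) (1/2 - λ²/(24π²r²Ψ²) + λ⁴/(160π⁴r⁴Ψ⁴))`. -/
theorem stmt_6 (eta Rrad lam r Ψ Φ Θ k₀ : ℝ) (heta : 0 < eta) (hRrad : 0 < Rrad)
    (hlam : 0 < lam) (hr : 0 < r) (hΨ : 0 < Ψ) (hk : k₀ = 2 * π / lam) :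
    Filter.Tendsto
      (fun L : ℝ × ℝ =>
        eta / (8 * Rrad) * (Ψ / (4 * π)) *
          ∫ x in (-(L.1 / (2 * r)))..(L.1 / (2 * r)),
            ∫ z in (-(L.2 / (2 * r)))..(L.2 / (2 * r)),
              (((x - Φ) ^ 2 + Ψ ^ 2 + (z - Θ) ^ 2) ^ (-(3 / 2 : ℝ)) -
                (1 / (k₀ ^ 2 * r ^ 2)) *
                  ((x - Φ) ^ 2 + Ψ ^ 2 + (z - Θ) ^ 2) ^ (-(5 / 2 : ℝ)) +
                (1 / (k₀ ^ 4 * r ^ 4)) *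
                  ((x - Φ) ^ 2 + Ψ ^ 2 + (z - Θ) ^ 2) ^ (-(7 / 2 : ℝ))))
      (Filter.atTop ×ˢ Filter.atTop)
      (𝓝 (eta / (8 * Rrad) *
        (1 / 2 - lam ^ 2 / (24 * π ^ 2 * r ^ 2 * Ψ ^ 2) +
          lam ^ 4 / (160 * π ^ 4 * r ^ 4 * Ψ ^ 4)))) :=
  stmt_6_general eta Rrad lam r Ψ Φ Θ k₀ hr hΨ hk
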